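/- arXiv:1802.07863 — 4 statements merged into one kernel-verified Lean document; each statement's English description precedes it below -/
import Mathlib

section
/- If X is a dominating set of G and Y is a child of X (Parent(Y) = X), then cand(Y) is a strict subset of cand(X). -/
open scoped Classical

def Dom {V : Type*} (G : SimpleGraph V) (D : Finset V) : Prop :=
  ∀ v : V, v ∈ D ∨ ∃ u ∈ D, G.Adj v u

/-- The parent of a dominating set `X ≠ univ`: add the minimum vertex outside `X`.
    (`univ` is mapped to itself.) -/
def Parent {V : Type*} [Fintype V] [LinearOrder V] (X : Finset V) : Finset V :=
  if h : X = Finset.univ then X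
  else insert ((Finset.univ \ X).min' (Finset.sdiff_nonempty.mpr
    fun hsub => h (Finset.univ_subset_iff.mp hsub))) X

/-- The candidate set of `X`. -/
def cand {V : Type*} [Fintype V] [LinearOrder V] (G : SimpleGraph V) (X : Finset V) : Set V :=
  {v | Dom G (X.erase v) ∧ Parent (X.erase v) = X}

lemma Dom.mono {V : Type*} (G : SimpleGraph V) {A B : Finset V} (h : Dom G A) (hAB : A ⊆ B) :
    Dom G B := by
  intro v
  rcases h v with h | ⟨u, hu, hadj⟩
  · exact Or.inl (hAB h)
  · exact Or.inr ⟨u, hAB hu, hadj⟩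

lemma Parent_of_ne {V : Type*} [Fintype V] [LinearOrder V] {S : Finset V}
    (h : S ≠ Finset.univ) (hne : (Finset.univ \ S).Nonempty) :
    Parent S = insert ((Finset.univ \ S).min' hne) S := by
  rw [Parent, dif_neg h]

lemma ne_univ_of_notMem {V : Type*} [Fintype V] {S : Finset V} {v : V} (h : v ∉ S) :
    S ≠ Finset.univ := fun hu => h (hu ▸ Finset.mem_univ v)

/-- If `Y` is a child of the dominating set `X`, then `cand Y ⊂ cand X`. -/
theorem cand_ssubset {V : Type*} [Fintype V] [LinearOrder V] (G : SimpleGraph V)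
    (X Y : Finset V) (hX : Dom G X) (hY : Dom G Y) (hYne : Y ≠ Finset.univ)
    (hchild : Parent Y = X) : cand G Y ⊂ cand G X := by
  have hne : (Finset.univ \ Y).Nonempty := Finset.sdiff_nonempty.mpr
    fun hsub => hYne (Finset.univ_subset_iff.mp hsub)
  set m := (Finset.univ \ Y).min' hne with hm
  have hmY : m ∉ Y := (Finset.mem_sdiff.mp ((Finset.univ \ Y).min'_mem hne)).2
  have hXdef : X = insert m Y := by rw [← hchild, Parent_of_ne hYne hne]
  have hYX : Y ⊆ X := hXdef ▸ Finset.subset_insert m Y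
  have hmX : m ∈ X := hXdef ▸ Finset.mem_insert_self m Y
  have hXneY : X ≠ Y := fun h => hmY (h ▸ hmX)
  constructor
  · -- cand Y ⊆ cand X
    intro v hv
    obtain ⟨hdom, hpar⟩ := hv
    have hvY : v ∈ Y := by
      by_contra hvY
      rw [Finset.erase_eq_of_notMem hvY, hchild] at hpar
      exact hXneY hpar
    have hvE : v ∉ Y.erase v := Finset.notMem_erase v Y
    have hEne : Y.erase v ≠ Finset.univ := ne_univ_of_notMem hvE
    have hne2 : (Finset.univ \ Y.erase v).Nonempty := Finset.sdiff_nonempty.mpr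
      fun hsub => hEne (Finset.univ_subset_iff.mp hsub)
    rw [Parent_of_ne hEne hne2] at hpar
    set m2 := (Finset.univ \ Y.erase v).min' hne2 with hm2
    have hm2v : m2 = v := by
      have hm2Y : m2 ∈ Y := hpar ▸ Finset.mem_insert_self m2 (Y.erase v)
      have hm2E : m2 ∉ Y.erase v :=
        (Finset.mem_sdiff.mp ((Finset.univ \ Y.erase v).min'_mem hne2)).2
      by_contra hne'
      exact hm2E (Finset.mem_erase.mpr ⟨hne', hm2Y⟩)
    -- v is the minimum of univ \ (Y.erase v)
    have hvX : v ∈ X := hYX hvY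
    have hvXE : v ∉ X.erase v := Finset.notMem_erase v X
    have hXEne : X.erase v ≠ Finset.univ := ne_univ_of_notMem hvXE
    have hne3 : (Finset.univ \ X.erase v).Nonempty := Finset.sdiff_nonempty.mpr
      fun hsub => hXEne (Finset.univ_subset_iff.mp hsub)
    refine ⟨Dom.mono G hdom (Finset.erase_subset_erase v hYX), ?_⟩
    rw [Parent_of_ne hXEne hne3]
    have hm3v : (Finset.univ \ X.erase v).min' hne3 = v := by
      apply le_antisymm
      · exact Finset.min'_le _ v (Finset.mem_sdiff.mpr ⟨Finset.mem_univ v, hvXE⟩)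
      · have hmem : (Finset.univ \ X.erase v).min' hne3 ∈ Finset.univ \ Y.erase v := by
          have h' := (Finset.univ \ X.erase v).min'_mem hne3
          rw [Finset.mem_sdiff] at h' ⊢
          exact ⟨h'.1, fun hc => h'.2 (Finset.erase_subset_erase v hYX hc)⟩
        calc v = m2 := hm2v.symm
          _ ≤ _ := Finset.min'_le _ _ hmem
    rw [hm3v, Finset.insert_erase hvX]
  · -- not cand X ⊆ cand Y : m ∈ cand X \ cand Y
    intro hback
    have hmcX : m ∈ cand G X := by
      have hXe : X.erase m = Y := by rw [hXdef, Finset.erase_insert hmY]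
      exact ⟨hXe ▸ hY, by rw [hXe, hchild]⟩
    have := hback hmcX
    obtain ⟨-, hpar⟩ := this
    rw [Finset.erase_eq_of_notMem hmY, hchild] at hpar
    exact hXneY hpar
end

section
/- Let X be a dominating set of G and v ∈ cand(X). Then cand(X) \ cand(X \ {v}) equals Del1(X,v) ∪ Del2(X,v) ∪ Del3(X,v), where Del1(X,v) = {u ∈ cand(X), u < v : N[u] ∩ X = {u,v}}, Del2(X,v) = {u ∈ cand(X), u < v : ∃ w ∈ V \ (X \ {v}) with N[w] ∩ X = {u,v}}, and Del3(X,v) = {u ∈ cand(X) : u ≥ v}. -/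
open scoped Classical

/-- Closed neighborhood of a vertex, as a set. -/
def clN {V : Type*} (G : SimpleGraph V) (u : V) : Set V := insert u {w | G.Adj u w}

def Del1 {V : Type*} [Fintype V] [LinearOrder V] (G : SimpleGraph V)
    (X : Finset V) (v : V) : Set V :=
  {u ∈ cand G X | u < v ∧ clN G u ∩ ↑X = {u, v}}

def Del2 {V : Type*} [Fintype V] [LinearOrder V] (G : SimpleGraph V)
    (X : Finset V) (v : V) : Set V :=
  {u ∈ cand G X | u < v ∧ ∃ w : V, w ∉ X.erase v ∧ clN G w ∩ ↑X = {u, v}}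

def Del3 {V : Type*} [Fintype V] [LinearOrder V] (G : SimpleGraph V)
    (X : Finset V) (v : V) : Set V :=
  {u ∈ cand G X | v ≤ u}

/-! For `u ∈ cand X`, membership in `cand (X \ {v})` amounts to `u < v` (so that `u` is still the
least vertex missing from `X \ {u, v}`) together with `X \ {u, v}` being dominating. As `X \ {u}`
and `X \ {v}` both dominate, `X \ {u, v}` fails to dominate exactly when some `N[w]` meets `X` in
`{u, v}`; either `w = u` (giving `Del1`) or `w ∉ X \ {v}` (giving `Del2`). -/

section

variable {V : Type*}

lemma mem_clN {G : SimpleGraph V} {w x : V} : x ∈ clN G w ↔ x = w ∨ G.Adj w x := Iff.rfl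

lemma dom_iff_clN_inter_nonempty {G : SimpleGraph V} {D : Finset V} :
    Dom G D ↔ ∀ w, (clN G w ∩ ↑D).Nonempty := by
  refine forall_congr' fun w => ?_
  simp only [Set.Nonempty, Set.mem_inter_iff, mem_clN, Finset.mem_coe]
  grind

lemma Set.inter_diff_pair_eq_empty_iff {A X : Set V} {u v : V}
    (hu : (A ∩ (X \ {u})).Nonempty) (hv : (A ∩ (X \ {v})).Nonempty) :
    A ∩ ((X \ {v}) \ {u}) = ∅ ↔ A ∩ X = {u, v} := by
  obtain ⟨x, hxA, hxX, hxu⟩ := hu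
  obtain ⟨y, hyA, hyX, hyv⟩ := hv
  simp only [Set.ext_iff, Set.mem_inter_iff, Set.mem_sdiff, Set.mem_singleton_iff,
    Set.mem_insert_iff, Set.mem_empty_iff_false]
  grind

variable [DecidableEq V]

lemma not_dom_erase_erase_iff {G : SimpleGraph V} {X : Finset V} {u v : V}
    (hu : Dom G (X.erase u)) (hv : Dom G (X.erase v)) :
    ¬ Dom G ((X.erase v).erase u) ↔ ∃ w, clN G w ∩ ↑X = {u, v} := by
  rw [dom_iff_clN_inter_nonempty] at hu hv ⊢
  push Not
  refine exists_congr fun w => ?_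
  simp only [Finset.coe_erase] at hu hv ⊢
  exact Set.inter_diff_pair_eq_empty_iff (hu w) (hv w)

lemma exists_clN_inter_eq_pair_iff {G : SimpleGraph V} {X : Finset V} {u v : V} :
    (∃ w, clN G w ∩ ↑X = {u, v}) ↔
      clN G u ∩ ↑X = {u, v} ∨ ∃ w, w ∉ X.erase v ∧ clN G w ∩ ↑X = {u, v} := by
  constructor
  · rintro ⟨w, hw⟩
    by_cases hwX : w ∈ X.erase v
    · have hw_pair : w ∈ ({u, v} : Set V) :=
        hw ▸ ⟨Set.mem_insert w _, Finset.mem_of_mem_erase hwX⟩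
      rcases hw_pair with rfl | rfl
      · exact .inl hw
      · exact absurd hwX (Finset.notMem_erase w X)
    · exact .inr ⟨w, hwX, hw⟩
  · rintro (hu | ⟨w, -, hw⟩)
    exacts [⟨u, hu⟩, ⟨w, hw⟩]

end

section

variable {V : Type*} [Fintype V] [LinearOrder V]

lemma parent_erase_eq_iff {X : Finset V} {u : V} :
    Parent (X.erase u) = X ↔ u ∈ X ∧ ∀ w ∉ X, u < w := by
  have hne : X.erase u ≠ Finset.univ := fun h => Finset.notMem_erase u X (h ▸ Finset.mem_univ u)
  rw [Parent, dif_neg hne]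
  generalize_proofs h_nonempty
  have hm := Finset.isLeast_min' _ h_nonempty
  generalize Finset.min' _ h_nonempty = m at hm ⊢
  simp only [IsLeast, lowerBounds, Finset.coe_sdiff, Finset.coe_univ, Set.mem_sdiff,
    Set.mem_univ, Finset.mem_coe, Finset.mem_erase, true_and, Set.mem_ofPred_eq, not_and_or,
    ne_eq, not_not] at hm
  constructor
  · intro h
    have hmX : m ∈ X := h ▸ Finset.mem_insert_self m _
    obtain rfl : m = u := hm.1.resolve_right (not_not.mpr hmX)
    exact ⟨hmX, fun w hw => (hm.2 (.inr hw)).lt_of_ne (ne_of_mem_of_not_mem hmX hw)⟩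
  · rintro ⟨huX, hu⟩
    obtain rfl : m = u :=
      le_antisymm (hm.2 (.inl rfl)) (hm.1.elim ge_of_eq fun hmX => (hu m hmX).le)
    exact Finset.insert_erase huX

lemma mem_cand_iff {G : SimpleGraph V} {X : Finset V} {u : V} :
    u ∈ cand G X ↔ Dom G (X.erase u) ∧ u ∈ X ∧ ∀ w ∉ X, u < w := by
  rw [cand, Set.mem_ofPred_eq, parent_erase_eq_iff]

lemma mem_cand_erase_iff {G : SimpleGraph V} {X : Finset V} {u v : V}
    (hu : u ∈ cand G X) :
    u ∈ cand G (X.erase v) ↔ u < v ∧ Dom G ((X.erase v).erase u) := by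
  obtain ⟨-, huX, hu_min⟩ := mem_cand_iff.mp hu
  rw [mem_cand_iff]
  grind

end

theorem cand_diff_eq_general {V : Type*} [Fintype V] [LinearOrder V] (G : SimpleGraph V)
    (X : Finset V) (v : V) (hv : v ∈ cand G X) :
    cand G X \ cand G (X.erase v) = Del1 G X v ∪ Del2 G X v ∪ Del3 G X v := by
  obtain ⟨hv_dom, -, -⟩ := mem_cand_iff.mp hv
  ext u
  simp only [Del1, Del2, Del3, Set.mem_sdiff, Set.mem_union, Set.mem_ofPred_eq]
  by_cases hu : u ∈ cand G X
  · have h_pair := not_dom_erase_erase_iff (mem_cand_iff.mp hu).1 hv_dom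
    rw [exists_clN_inter_eq_pair_iff] at h_pair
    by_cases huv : u < v <;> simp [hu, huv, not_lt.mp, mem_cand_erase_iff hu, h_pair]
  · simp [hu]

/-- `cand(X) \ cand(X \ {v}) = Del1 ∪ Del2 ∪ Del3`. -/
theorem cand_diff_eq {V : Type*} [Fintype V] [LinearOrder V] (G : SimpleGraph V)
    (X : Finset V) (v : V) (hX : Dom G X) (hv : v ∈ cand G X) :
    cand G X \ cand G (X.erase v) = Del1 G X v ∪ Del2 G X v ∪ Del3 G X v :=
  cand_diff_eq_general G X v hv
end

section
/- Let G be a graph, X a dominating set of G, and u a vertex of the local structure G_v(X) = G[(V \ N[X \ cand(X)^{≤v}]) ∪ cand(X)^{≤v}] for some v ∈ cand(X). If u ∉ cand(X), then u has at least 2 neighbors (in G_v(X)) belonging to cand(X)^{≤v}; otherwise u's closed neighborhood in G_v(X) meets cand(X)^{≤v} in at least 1 vertex. -/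
open scoped Classical

/-- Candidate vertices of `X` that are at most `v`. -/
def candLe {V : Type*} [Fintype V] [LinearOrder V] (G : SimpleGraph V)
    (X : Finset V) (v : V) : Set V := {w ∈ cand G X | w ≤ v}

/-- Closed neighborhood of a set of vertices. -/
def clNS {V : Type*} (G : SimpleGraph V) (A : Set V) : Set V :=
  A ∪ {x | ∃ a ∈ A, G.Adj x a}

/-- Vertex set of the local structure `G_v(X)`. -/
def locV {V : Type*} [Fintype V] [LinearOrder V] (G : SimpleGraph V)
    (X : Finset V) (v : V) : Set V :=
  (Set.univ \ clNS G (↑X \ candLe G X v)) ∪ candLe G X v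

lemma cand_mem_aux {V : Type*} [Fintype V] [LinearOrder V] (G : SimpleGraph V)
    (X : Finset V) {w : V} (hw : w ∈ cand G X) : w ∈ X := by
  by_contra h
  have he : X.erase w = X := Finset.erase_eq_of_notMem h
  have hp := hw.2
  rw [he] at hp
  unfold Parent at hp
  split_ifs at hp with hXu
  · exact h (hXu ▸ Finset.mem_univ w)
  · have hm := Finset.min'_mem (Finset.univ \ X) (Finset.sdiff_nonempty.mpr
      fun hsub => hXu (Finset.univ_subset_iff.mp hsub))
    have hmem : (Finset.univ \ X).min' _ ∈ X := hp ▸ Finset.mem_insert_self _ _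
    rw [Finset.mem_sdiff] at hm
    exact hm.2 hmem

/-- Every vertex of the local structure `G_v(X)` not in `cand X` has at least two
    neighbors (in `G_v(X)`) in `cand(X)^{≤v}`; every other vertex has at least one
    vertex of `cand(X)^{≤v}` in its closed neighborhood in `G_v(X)`. -/
theorem local_structure_cand {V : Type*} [Fintype V] [LinearOrder V] (G : SimpleGraph V)
    (X : Finset V) (v u : V) (hX : Dom G X) (hv : v ∈ cand G X) (hu : u ∈ locV G X v) :
    (u ∉ cand G X → 2 ≤ ({w | G.Adj u w ∧ w ∈ locV G X v} ∩ candLe G X v).ncard) ∧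
    (u ∈ cand G X → 1 ≤ ((insert u {w | G.Adj u w ∧ w ∈ locV G X v}) ∩ candLe G X v).ncard) := by
  constructor
  · intro hnc
    have hu' : u ∉ clNS G (↑X \ candLe G X v) := by
      cases hu with
      | inl h => exact h.2
      | inr h => exact absurd h.1 hnc
    have hunX : u ∉ X := fun h =>
      hu' (Or.inl ⟨h, fun hc => hnc hc.1⟩)
    have hnb : ∀ a : V, G.Adj u a → a ∈ X → a ∈ candLe G X v := by
      intro a ha haX
      by_contra hac
      exact hu' (Or.inr ⟨a, ⟨haX, hac⟩, ha⟩)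
    obtain ⟨a, haX, ha⟩ := (hX u).resolve_left hunX
    have haC : a ∈ candLe G X v := hnb a ha haX
    obtain ⟨b, hbX, hb⟩ := (haC.1.1 u).resolve_left
      (fun h => hunX (Finset.mem_of_mem_erase h))
    have hba : b ≠ a := Finset.ne_of_mem_erase hbX
    have hbC : b ∈ candLe G X v := hnb b hb (Finset.mem_of_mem_erase hbX)
    have hsub : ({a, b} : Set V) ⊆ {w | G.Adj u w ∧ w ∈ locV G X v} ∩ candLe G X v := by
      intro x hx
      rcases hx with rfl | rfl
      · exact ⟨⟨ha, Or.inr haC⟩, haC⟩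
      · exact ⟨⟨hb, Or.inr hbC⟩, hbC⟩
    calc 2 = ({a, b} : Set V).ncard := (Set.ncard_pair hba.symm).symm
    _ ≤ _ := Set.ncard_le_ncard hsub (Set.toFinite _)
  · intro hc
    have huC : u ∈ candLe G X v := by
      by_contra h
      have hX' : u ∈ clNS G (↑X \ candLe G X v) :=
        Or.inl ⟨cand_mem_aux G X hc, h⟩
      cases hu with
      | inl h' => exact h'.2 hX'
      | inr h' => exact h h'
    have : u ∈ (insert u {w | G.Adj u w ∧ w ∈ locV G X v}) ∩ candLe G X v :=
      ⟨Set.mem_insert _ _, huC⟩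
    exact (Set.ncard_pos (Set.toFinite _)).mpr ⟨u, this⟩
end

section
/- In a graph G with girth at least 9, let X be a dominating set, v ∈ cand(X), and Y = X \ {v} a dominating set. Then no two distinct vertices x, y ∈ (Del1(X,v) ∪ Del2(X,v)) have a common neighbor in G that lies outside N[X \ cand(Y)]. -/
open scoped Classical

open SimpleGraph

lemma girth_le_cycle {α : Type*} {G : SimpleGraph α} {a : α} {w : G.Walk a a} (h : w.IsCycle) :
    G.girth ≤ w.length := by
  have h1 : G.egirth ≤ w.length := by
    rw [SimpleGraph.egirth]
    exact iInf_le_of_le a (iInf_le_of_le w (iInf_le _ h))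
  have h2 := ENat.toNat_le_toNat h1 (by simp : ((w.length : ℕ∞) ≠ ⊤))
  simpa [SimpleGraph.girth] using h2

lemma cyc3 {α : Type*} {G : SimpleGraph α} {a b c : α}
    (hab : G.Adj a b) (hbc : G.Adj b c) (hca : G.Adj c a) : G.girth ≤ 3 := by
  have h : (Walk.cons hab (Walk.cons hbc (Walk.cons hca Walk.nil))).IsCycle := by
    simp [Walk.isCycle_def, Walk.isTrail_def, hab.ne, hbc.ne, hca.ne, hab.ne', hbc.ne', hca.ne']
  simpa using girth_le_cycle h

lemma cyc4 {α : Type*} {G : SimpleGraph α} {a b c d : α}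
    (hab : G.Adj a b) (hbc : G.Adj b c) (hcd : G.Adj c d) (hda : G.Adj d a)
    (hac : a ≠ c) (hbd : b ≠ d) : G.girth ≤ 4 := by
  have h : (Walk.cons hab (Walk.cons hbc (Walk.cons hcd (Walk.cons hda Walk.nil)))).IsCycle := by
    simp [Walk.isCycle_def, Walk.isTrail_def, hab.ne, hbc.ne, hcd.ne, hda.ne,
      hab.ne', hbc.ne', hcd.ne', hda.ne', hac, hbd, hac.symm, hbd.symm, Sym2.eq_iff]
  simpa using girth_le_cycle h

lemma cyc5 {α : Type*} {G : SimpleGraph α} {a b c d e : α}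
    (hab : G.Adj a b) (hbc : G.Adj b c) (hcd : G.Adj c d) (hde : G.Adj d e) (hea : G.Adj e a)
    (hac : a ≠ c) (had : a ≠ d) (hbd : b ≠ d) (hbe : b ≠ e) (hce : c ≠ e) : G.girth ≤ 5 := by
  have h : (Walk.cons hab (Walk.cons hbc (Walk.cons hcd (Walk.cons hde
      (Walk.cons hea Walk.nil))))).IsCycle := by
    simp [Walk.isCycle_def, Walk.isTrail_def, hab.ne, hbc.ne, hcd.ne, hde.ne, hea.ne,
      hab.ne', hbc.ne', hcd.ne', hde.ne', hea.ne', hac, had, hbd, hbe, hce,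
      hac.symm, had.symm, hbd.symm, hbe.symm, hce.symm, Sym2.eq_iff]
  simpa using girth_le_cycle h

lemma cyc6 {α : Type*} {G : SimpleGraph α} {a b c d e f : α}
    (hab : G.Adj a b) (hbc : G.Adj b c) (hcd : G.Adj c d) (hde : G.Adj d e)
    (hef : G.Adj e f) (hfa : G.Adj f a)
    (hac : a ≠ c) (had : a ≠ d) (hae : a ≠ e) (hbd : b ≠ d) (hbe : b ≠ e) (hbf : b ≠ f)
    (hce : c ≠ e) (hcf : c ≠ f) (hdf : d ≠ f) : G.girth ≤ 6 := by
  have h : (Walk.cons hab (Walk.cons hbc (Walk.cons hcd (Walk.cons hde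
      (Walk.cons hef (Walk.cons hfa Walk.nil)))))).IsCycle := by
    simp [Walk.isCycle_def, Walk.isTrail_def, hab.ne, hbc.ne, hcd.ne, hde.ne, hef.ne, hfa.ne,
      hab.ne', hbc.ne', hcd.ne', hde.ne', hef.ne', hfa.ne',
      hac, had, hae, hbd, hbe, hbf, hce, hcf, hdf,
      hac.symm, had.symm, hae.symm, hbd.symm, hbe.symm, hbf.symm, hce.symm, hcf.symm, hdf.symm,
      Sym2.eq_iff]
  simpa using girth_le_cycle h

lemma mem_clN_iff {V : Type*} {G : SimpleGraph V} {u w : V} :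
    w ∈ clN G u ↔ w = u ∨ G.Adj u w := by
  simp [clN]

/-- A member of `Del1 ∪ Del2` is `< v` and is at distance at most 2 from `v`. -/
lemma del_near {V : Type*} [Fintype V] [LinearOrder V] {G : SimpleGraph V}
    {X : Finset V} {v x : V} (hx : x ∈ Del1 G X v ∪ Del2 G X v) :
    x < v ∧ (G.Adj x v ∨ ∃ a, G.Adj x a ∧ G.Adj a v) := by
  rcases hx with hx | hx
  · obtain ⟨-, hlt, heq⟩ := hx
    refine ⟨hlt, Or.inl ?_⟩
    have hv : v ∈ clN G x ∩ (X : Set V) := by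
      rw [heq]; exact Or.inr rfl
    rcases mem_clN_iff.mp hv.1 with h | h
    · exact absurd h (hlt.ne')
    · exact h
  · obtain ⟨-, hlt, w', -, heq⟩ := hx
    refine ⟨hlt, ?_⟩
    have hxw : x ∈ clN G w' ∩ (X : Set V) := by rw [heq]; exact Or.inl rfl
    have hvw : v ∈ clN G w' ∩ (X : Set V) := by rw [heq]; exact Or.inr rfl
    rcases mem_clN_iff.mp hxw.1 with hx1 | hx1
    · -- w' = x
      rcases mem_clN_iff.mp hvw.1 with hv1 | hv1
      · exact absurd (hv1.trans hx1.symm) hlt.ne'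
      · exact Or.inl (hx1 ▸ hv1)
    · rcases mem_clN_iff.mp hvw.1 with hv1 | hv1
      · exact Or.inl (hv1 ▸ hx1).symm
      · exact Or.inr ⟨w', hx1.symm, hv1⟩

/-- In a graph of girth at least 9, no two distinct vertices of `Del1 ∪ Del2` have a
    common neighbor outside `N[X \ cand(Y)]`. -/
theorem girth_no_common_neighbor {V : Type*} [Fintype V] [LinearOrder V]
    (G : SimpleGraph V) (hg : 9 ≤ G.girth) (X Y : Finset V) (v : V)
    (hX : Dom G X) (hv : v ∈ cand G X) (hY : Y = X.erase v) (hYdom : Dom G Y) :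
    ∀ x ∈ Del1 G X v ∪ Del2 G X v, ∀ y ∈ Del1 G X v ∪ Del2 G X v, x ≠ y →
      ¬∃ w : V, G.Adj x w ∧ G.Adj y w ∧ w ∉ clNS G (↑X \ cand G Y) := by
  intro x hx y hy hxy ⟨w, hxw, hyw, hwn⟩
  obtain ⟨-, hpar⟩ := hv
  -- v ∈ X
  have hvX : v ∈ X := by
    by_contra hvX
    rw [Finset.erase_eq_of_notMem hvX] at hpar
    unfold Parent at hpar
    split at hpar
    · next h => exact hvX (h ▸ Finset.mem_univ v)
    · next h =>
      have hm := Finset.min'_mem (Finset.univ \ X) (Finset.sdiff_nonempty.mpr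
        fun hsub => h (Finset.univ_subset_iff.mp hsub))
      have hmX : (Finset.univ \ X).min' _ ∉ X := (Finset.mem_sdiff.mp hm).2
      exact hmX (Finset.insert_eq_self.mp hpar)
  -- v ∉ cand G Y
  have hvc : v ∉ cand G Y := by
    rintro ⟨-, hp⟩
    rw [hY, Finset.erase_idem] at hp
    unfold Parent at hp
    split at hp
    · next h =>
      have : v ∈ X.erase v := h ▸ Finset.mem_univ v
      exact (Finset.notMem_erase v X) this
    · next h =>
      have hm := Finset.min'_mem (Finset.univ \ X.erase v) (Finset.sdiff_nonempty.mpr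
        fun hsub => h (Finset.univ_subset_iff.mp hsub))
      have hmX : (Finset.univ \ X.erase v).min' _ ∉ X.erase v := (Finset.mem_sdiff.mp hm).2
      exact hmX (Finset.insert_eq_self.mp hp)
  have hvmem : v ∈ ((X : Set V) \ cand G Y) := ⟨hvX, hvc⟩
  -- w ≠ v and ¬ Adj w v
  have hwv : w ≠ v := by
    rintro rfl
    exact hwn (Or.inl hvmem)
  have hwav : ¬ G.Adj w v := by
    intro h
    exact hwn (Or.inr ⟨v, hvmem, h⟩)
  obtain ⟨hxlt, hxp⟩ := del_near hx
  obtain ⟨hylt, hyp⟩ := del_near hy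
  have hgirth : G.girth ≤ 6 := by
    by_cases hadj : G.Adj x y
    · exact le_trans (cyc3 hxw hyw.symm hadj.symm) (by norm_num)
    · rcases hxp with hx1 | ⟨a, hxa, hav⟩ <;> rcases hyp with hy1 | ⟨b, hyb, hbv⟩
      · -- 4-cycle v-x-w-y
        exact le_trans (cyc4 hx1.symm hxw hyw.symm hy1 hwv.symm hxy) (by norm_num)
      · -- 5-cycle v-x-w-y-b
        have hxb : x ≠ b := by rintro rfl; exact hadj hyb.symm
        have hwb : w ≠ b := by rintro rfl; exact hwav hbv
        exact le_trans (cyc5 hx1.symm hxw hyw.symm hyb hbv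
          hwv.symm hylt.ne' hxy hxb hwb) (by norm_num)
      · -- 5-cycle v-y-w-x-a
        have hya : y ≠ a := by rintro rfl; exact hadj hxa
        have hwa : w ≠ a := by rintro rfl; exact hwav hav
        exact le_trans (cyc5 hy1.symm hyw hxw.symm hxa hav
          hwv.symm hxlt.ne' hxy.symm hya hwa) (by norm_num)
      · by_cases hab : a = b
        · -- 4-cycle a-x-w-y
          subst hab
          have haw : a ≠ w := by rintro rfl; exact hwav hav
          exact le_trans (cyc4 hxa.symm hxw hyw.symm hyb haw hxy) (by norm_num)
        · -- 6-cycle v-a-x-w-y-b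
          have hya : y ≠ a := by rintro rfl; exact hadj hxa
          have hxb : x ≠ b := by rintro rfl; exact hadj hyb.symm
          have haw : a ≠ w := by rintro rfl; exact hwav hav
          have hwb : w ≠ b := by rintro rfl; exact hwav hbv
          exact cyc6 hav.symm hxa.symm hxw hyw.symm hyb hbv
            hxlt.ne' hwv.symm hylt.ne' haw hya.symm hab hxy hxb hwb
  omega
end
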